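/- Let λ, ω > 0 with λ² + ω² = 1, let θ < 0 and t* ∈ ℝ. If e^{λt*}·(λ·sin(ωt*) − ω·cos(ωt*)) = −ω and e^{λt*}·(λ² + ω²)·sin(ωt*) = ω·θ, then e^{2λt*} = θ² + 2λθ + 1 and cos(ωt*)/sin(ωt*) = (λθ + 1)/(ωθ) (in particular sin(ωt*) ≠ 0). -/

import Mathlib

/-!
Writing `E = e^{λt*}`, the two hypotheses form a linear system in `E sin(ωt*)` and
`E cos(ωt*)`; using `λ² + ω² = 1` it solves to `E sin(ωt*) = ωθ` and `E cos(ωt*) = λθ + 1`.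
So `(ωθ, λθ + 1)` are the polar coordinates of radius `E` and angle `ωt*`: the radius squared
gives `e^{2λt*} = ω²θ² + (λθ + 1)² = θ² + 2λθ + 1`, and the angle gives the cotangent.
-/

open Real

lemma sq_eq_of_mul_sin_of_mul_cos {r x a b : ℝ} (hs : r * sin x = a) (hc : r * cos x = b) :
    r ^ 2 = a ^ 2 + b ^ 2 := by
  linear_combination (-r ^ 2) * sin_sq_add_cos_sq x + (r * sin x + a) * hs + (r * cos x + b) * hc

lemma cos_div_sin_eq_of_mul_sin_of_mul_cos {r x a b : ℝ} (hr : r ≠ 0) (hs : r * sin x = a)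
    (hc : r * cos x = b) : cos x / sin x = b / a := by
  rw [← hs, ← hc, mul_div_mul_left _ _ hr]

theorem stmt3 (lam ω θ tstar : ℝ) (hω : 0 < ω)
    (hunit : lam ^ 2 + ω ^ 2 = 1) (hθ : θ < 0)
    (h1 : Real.exp (lam * tstar) * (lam * Real.sin (ω * tstar) - ω * Real.cos (ω * tstar)) = -ω)
    (h2 : Real.exp (lam * tstar) * (lam ^ 2 + ω ^ 2) * Real.sin (ω * tstar) = ω * θ) :
    Real.exp (2 * lam * tstar) = θ ^ 2 + 2 * lam * θ + 1 ∧
    Real.sin (ω * tstar) ≠ 0 ∧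
    Real.cos (ω * tstar) / Real.sin (ω * tstar) = (lam * θ + 1) / (ω * θ) := by
  set E := exp (lam * tstar)
  have hωθ : ω * θ ≠ 0 := (mul_neg_of_pos_of_neg hω hθ).ne
  have hs : E * sin (ω * tstar) = ω * θ := by rwa [hunit, mul_one] at h2
  have hc : E * cos (ω * tstar) = lam * θ + 1 :=
    mul_left_cancel₀ hω.ne' (by linear_combination lam * hs - h1)
  refine ⟨?_, fun h0 ↦ hωθ (by rw [← hs, h0, mul_zero]), ?_⟩
  · calc exp (2 * lam * tstar) = E ^ 2 := by rw [sq, ← exp_add]; ring_nf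
      _ = (ω * θ) ^ 2 + (lam * θ + 1) ^ 2 := sq_eq_of_mul_sin_of_mul_cos hs hc
      _ = θ ^ 2 + 2 * lam * θ + 1 := by linear_combination θ ^ 2 * hunit
  · exact cos_div_sin_eq_of_mul_sin_of_mul_cos (exp_pos _).ne' hs hc
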